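/- arXiv:1811.00111 — 2 statements merged into one kernel-verified Lean document; each statement's English description precedes it below -/
import Mathlib

section
/- For k₁, k₂ > 0, p ∈ (0,1), q > 1, the origin of the scalar system ẋ = −k₁⌊x⌉^p − k₂⌊x⌉^q is fixed-time stable: every solution with any initial condition x₀ ∈ ℝ reaches 0 in a time bounded by T_max = 1/(k₁(1−p)) + 1/(k₂(q−1)), independent of x₀. -/
/-!
With `V = x²` the equation reads `V' = -a V^α - b V^β` where `a = 2k₁`, `b = 2k₂` and
`α = (1 + p)/2 < 1 < β = (1 + q)/2`. Along `V' ≤ -c V^r` with `r ≠ 1`, the quantity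
`V^(1-r)/(1-r)` decreases at rate at least `c`. For `r = β` it stays in `(-1/(β-1), 0)` as
long as `V > 1`, so whatever `V 0` is, `V ≤ 1` after time `1/(b(β-1)) = 1/(k₂(q-1))`.
For `r = α` it is nonnegative and starts at most `1/(1-α)` once `V ≤ 1`, so `V` vanishes
within a further time `1/(a(1-α)) = 1/(k₁(1-p))`.
-/

open Set

lemma image_sub_le_mul_sub_of_hasDerivAt_le {f f' : ℝ → ℝ} {a b C : ℝ} (hab : a ≤ b)
    (hf : ∀ t ∈ Icc a b, HasDerivAt f (f' t) t) (hf' : ∀ t ∈ Icc a b, f' t ≤ C) :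
    f b - f a ≤ C * (b - a) :=
  (convex_Icc a b).image_sub_le_mul_sub_of_deriv_le
    (fun t ht => (hf t ht).continuousAt.continuousWithinAt)
    (fun t ht => (hf t (interior_subset ht)).differentiableAt.differentiableWithinAt)
    (fun t ht => (hf t (interior_subset ht)).deriv ▸ hf' t (interior_subset ht))
    a (left_mem_Icc.2 hab) b (right_mem_Icc.2 hab) hab

section Lyapunov

variable {V V' : ℝ → ℝ} {s t : ℝ}

lemma rpow_one_sub_div_sub_le_of_hasDerivAt_le {c r : ℝ} (hr : r ≠ 1) (hst : s ≤ t)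
    (hpos : ∀ u ∈ Icc s t, 0 < V u) (hV : ∀ u ∈ Icc s t, HasDerivAt V (V' u) u)
    (hV' : ∀ u ∈ Icc s t, V' u ≤ -c * V u ^ r) :
    V t ^ (1 - r) / (1 - r) - V s ^ (1 - r) / (1 - r) ≤ -c * (t - s) := by
  have hr' : 1 - r ≠ 0 := sub_ne_zero.2 hr.symm
  refine image_sub_le_mul_sub_of_hasDerivAt_le (f := fun u => V u ^ (1 - r) / (1 - r))
    (f' := fun u => V' u * V u ^ (-r)) hst (fun u hu => ?_) (fun u hu => ?_)
  · refine (((hV u hu).rpow_const (Or.inl (hpos u hu).ne')).div_const (1 - r)).congr_deriv ?_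
    rw [sub_sub_cancel_left]
    field_simp
  · have hinv : V u ^ r * V u ^ (-r) = 1 := by
      rw [Real.rpow_neg (hpos u hu).le, mul_inv_cancel₀ (Real.rpow_pos_of_pos (hpos u hu) r).ne']
    calc V' u * V u ^ (-r) ≤ -c * V u ^ r * V u ^ (-r) :=
          mul_le_mul_of_nonneg_right (hV' u hu) (Real.rpow_pos_of_pos (hpos u hu) _).le
      _ = -c := by rw [mul_assoc, hinv, mul_one]

lemma le_one_of_hasDerivAt_le_neg_mul_rpow {b β : ℝ} (hβ : 1 < β) (hst : s ≤ t)
    (hT : 1 ≤ b * (β - 1) * (t - s)) (hanti : AntitoneOn V (Icc s t))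
    (hV : ∀ u ∈ Icc s t, HasDerivAt V (V' u) u)
    (hV' : ∀ u ∈ Icc s t, V' u ≤ -b * V u ^ β) :
    V t ≤ 1 := by
  by_contra! ht
  have hgt : ∀ u ∈ Icc s t, 1 < V u :=
    fun u hu => ht.trans_le (hanti hu (right_mem_Icc.2 hst) hu.2)
  have hdecay := rpow_one_sub_div_sub_le_of_hasDerivAt_le (by linarith) hst
    (fun u hu => one_pos.trans (hgt u hu)) hV hV'
  have hs : 0 < V s ^ (1 - β) :=
    Real.rpow_pos_of_pos (one_pos.trans (hgt s (left_mem_Icc.2 hst))) _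
  have ht' : V t ^ (1 - β) < 1 := Real.rpow_lt_one_of_one_lt_of_neg ht (by linarith)
  rw [← sub_div, div_le_iff_of_neg (by linarith)] at hdecay
  nlinarith

lemma eq_zero_of_hasDerivAt_le_neg_mul_rpow {a α : ℝ} (hα : α < 1) (hst : s ≤ t)
    (hT : V s ^ (1 - α) ≤ a * (1 - α) * (t - s)) (hanti : AntitoneOn V (Icc s t))
    (hnonneg : 0 ≤ V t) (hV : ∀ u ∈ Icc s t, HasDerivAt V (V' u) u)
    (hV' : ∀ u ∈ Icc s t, V' u ≤ -a * V u ^ α) :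
    V t = 0 := by
  by_contra ht
  have hpos : 0 < V t := hnonneg.lt_of_ne' ht
  have hdecay := rpow_one_sub_div_sub_le_of_hasDerivAt_le hα.ne hst
    (fun u hu => hpos.trans_le (hanti hu (right_mem_Icc.2 hst) hu.2)) hV hV'
  have ht' : 0 < V t ^ (1 - α) := Real.rpow_pos_of_pos hpos _
  rw [← sub_div, div_le_iff₀ (by linarith)] at hdecay
  nlinarith

theorem eq_zero_of_hasDerivAt_le_neg_mul_rpow_sub_mul_rpow {a b α β : ℝ} (ha : 0 < a)
    (hb : 0 < b) (hα : α < 1) (hβ : 1 < β) (hV0 : ∀ t, 0 ≤ t → 0 ≤ V t)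
    (hV : ∀ t, 0 ≤ t → HasDerivAt V (V' t) t)
    (hV' : ∀ t, 0 ≤ t → V' t ≤ -a * V t ^ α - b * V t ^ β) :
    ∀ t, 1 / (a * (1 - α)) + 1 / (b * (β - 1)) ≤ t → V t = 0 := by
  have hVα : ∀ t, 0 ≤ t → V' t ≤ -a * V t ^ α := fun t ht => by
    nlinarith [hV' t ht, Real.rpow_nonneg (hV0 t ht) β]
  have hVβ : ∀ t, 0 ≤ t → V' t ≤ -b * V t ^ β := fun t ht => by
    nlinarith [hV' t ht, Real.rpow_nonneg (hV0 t ht) α]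
  have hanti : AntitoneOn V (Ici 0) := fun s hs t _ hst => by
    have := image_sub_le_mul_sub_of_hasDerivAt_le (C := 0) hst (fun u hu => hV u (hs.trans hu.1))
      fun u hu => by nlinarith [hVα u (hs.trans hu.1), Real.rpow_nonneg (hV0 u (hs.trans hu.1)) α]
    linarith
  have hbβ : 0 < b * (β - 1) := by nlinarith
  have haα : 0 < a * (1 - α) := by nlinarith
  set T₁ := 1 / (b * (β - 1))
  set T₂ := 1 / (a * (1 - α))
  have hT₁ : 0 < T₁ := by positivity
  have hT₂ : 0 < T₂ := by positivity
  have hIcc : ∀ {s t : ℝ}, 0 ≤ s → Icc s t ⊆ Ici 0 := fun hs u hu => hs.trans hu.1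
  have hsmall : V T₁ ≤ 1 :=
    le_one_of_hasDerivAt_le_neg_mul_rpow hβ hT₁.le
      (by rw [sub_zero, mul_one_div_cancel hbβ.ne']) (hanti.mono (hIcc le_rfl))
      (fun u hu => hV u hu.1) (fun u hu => hVβ u hu.1)
  have hzero : V (T₁ + T₂) = 0 :=
    eq_zero_of_hasDerivAt_le_neg_mul_rpow hα (by linarith)
      (by rw [add_sub_cancel_left, mul_one_div_cancel haα.ne']
          exact Real.rpow_le_one (hV0 _ hT₁.le) hsmall (by linarith))
      (hanti.mono (hIcc hT₁.le)) (hV0 _ (by linarith))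
      (fun u hu => hV u (hT₁.le.trans hu.1)) (fun u hu => hVα u (hT₁.le.trans hu.1))
  intro t ht
  exact le_antisymm (hzero ▸ hanti (mem_Ici.2 (by linarith)) (mem_Ici.2 (by linarith))
    (by linarith)) (hV0 t (by linarith))

end Lyapunov

lemma Real.mul_sign_eq_abs (x : ℝ) : x * Real.sign x = |x| := by
  rcases lt_trichotomy x 0 with h | rfl | h
  · rw [Real.sign_of_neg h, abs_of_neg h, mul_neg_one]
  · simp
  · rw [Real.sign_of_pos h, abs_of_pos h, mul_one]

lemma mul_abs_rpow_mul_sign (x : ℝ) {p : ℝ} (hp : p + 1 ≠ 0) :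
    x * (|x| ^ p * Real.sign x) = (x ^ 2) ^ ((p + 1) / 2) := by
  rw [mul_left_comm, Real.mul_sign_eq_abs, ← Real.rpow_add_one' (abs_nonneg x) hp, ← sq_abs,
    ← Real.rpow_natCast_mul (abs_nonneg x)]
  push_cast
  ring_nf

theorem fixed_time_convergence_ode_general (k₁ k₂ p q : ℝ) (hk₁ : 0 < k₁) (hk₂ : 0 < k₂)
    (hp : p ∈ Set.Ioo (0:ℝ) 1) (hq : 1 < q) (x : ℝ → ℝ)
    (hode : ∀ t, 0 ≤ t → HasDerivAt x
      (-(k₁ * |x t| ^ p * Real.sign (x t)) - k₂ * |x t| ^ q * Real.sign (x t)) t) :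
    ∀ t, 1 / (k₁ * (1 - p)) + 1 / (k₂ * (q - 1)) ≤ t → x t = 0 := by
  have hV : ∀ t, 0 ≤ t → HasDerivAt (fun s => x s ^ 2)
      (-(2 * k₁) * (x t ^ 2) ^ ((p + 1) / 2) - 2 * k₂ * (x t ^ 2) ^ ((q + 1) / 2)) t := by
    intro t ht
    refine ((hode t ht).pow 2).congr_deriv ?_
    rw [← mul_abs_rpow_mul_sign _ (by linarith [hp.1]), ← mul_abs_rpow_mul_sign _ (by linarith)]
    push_cast
    ring
  have hsq := eq_zero_of_hasDerivAt_le_neg_mul_rpow_sub_mul_rpow (by positivity) (by positivity)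
    (by linarith [hp.2] : (p + 1) / 2 < 1) (by linarith : 1 < (q + 1) / 2)
    (fun t _ => sq_nonneg (x t)) hV (fun t _ => le_rfl)
  intro t ht
  refine pow_eq_zero_iff two_ne_zero |>.1 (hsq t ?_)
  convert ht using 3 <;> ring

theorem fixed_time_convergence_ode (k₁ k₂ p q : ℝ) (hk₁ : 0 < k₁) (hk₂ : 0 < k₂)
    (hp : p ∈ Set.Ioo (0:ℝ) 1) (hq : 1 < q) (x : ℝ → ℝ) (x₀ : ℝ) (hx0 : x 0 = x₀)
    (hode : ∀ t, 0 ≤ t → HasDerivAt x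
      (-(k₁ * |x t| ^ p * Real.sign (x t)) - k₂ * |x t| ^ q * Real.sign (x t)) t) :
    ∀ t, 1 / (k₁ * (1 - p)) + 1 / (k₂ * (q - 1)) ≤ t → x t = 0 :=
  fixed_time_convergence_ode_general k₁ k₂ p q hk₁ hk₂ hp hq x hode
end

section
/- Let f : ℝ → ℝ be continuous with f(0)=0 and x·f(x) > 0 for x ≠ 0. Suppose x : [0,∞) → ℝⁿ solves ẋᵢ = f(Σⱼ a_{ij}(x_j − x_i)) for a fixed symmetric nonnegative weight matrix. Then for every solution, t ↦ maxᵢ xᵢ(t) is nonincreasing and t ↦ minᵢ xᵢ(t) is nondecreasing; in particular V(x(t)) = max − min is nonincreasing. -/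
open Set Filter Topology

private lemma f_nonpos_of_nonpos {f : ℝ → ℝ} (hf0 : f 0 = 0)
    (hsgn : ∀ y : ℝ, y ≠ 0 → 0 < y * f y) {s : ℝ} (hs : s ≤ 0) : f s ≤ 0 := by
  rcases eq_or_lt_of_le hs with h | h
  · simp [h, hf0]
  · by_contra hpos
    push_neg at hpos
    have := hsgn s (ne_of_lt h)
    nlinarith

private lemma sup_antitone (n : ℕ) [NeZero n]
    (A : Matrix (Fin n) (Fin n) ℝ) (hpos : ∀ i j, 0 ≤ A i j)
    (f : ℝ → ℝ) (hf0 : f 0 = 0) (hsgn : ∀ y : ℝ, y ≠ 0 → 0 < y * f y)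
    (x : ℝ → Fin n → ℝ)
    (hode : ∀ t, 0 ≤ t → ∀ i,
      HasDerivAt (fun s => x s i) (f (∑ j, A i j * (x t j - x t i))) t) :
    AntitoneOn (fun t => ⨆ i, x t i) (Set.Ici 0) := by
  have hbdd : ∀ t, BddAbove (Set.range (x t)) := fun t => Set.Finite.bddAbove (Set.finite_range _)
  intro a ha b hb hab
  set M : ℝ → ℝ := fun t => ⨆ i, x t i with hM
  -- continuity of each coordinate at points ≥ 0
  have hcont : ∀ i, ContinuousOn (fun s => x s i) (Set.Icc a b) := by
    intro i t ht
    exact ((hode t (le_trans ha ht.1) i).continuousAt).continuousWithinAt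
  have hMcont : ContinuousOn M (Set.Icc a b) := by
    have heq : M = fun t => Finset.univ.sup' Finset.univ_nonempty (fun i => x t i) := by
      funext t
      rw [Finset.sup'_univ_eq_ciSup]
    rw [heq]
    exact ContinuousOn.finset_sup'_apply Finset.univ_nonempty (fun i _ => hcont i)
  -- the slope bound
  have bound : ∀ t ∈ Set.Ico a b, ∀ r : ℝ, (0:ℝ) < r →
      ∃ᶠ z in 𝓝[>] t, slope M t z < r := by
    intro t ht r hr
    have ht0 : (0:ℝ) ≤ t := le_trans ha ht.1
    -- for each i, eventually (x z i - M t) / (z - t) < r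
    have key : ∀ i, ∀ᶠ z in 𝓝[>] t, (x z i - M t) / (z - t) < r := by
      intro i
      rcases lt_or_eq_of_le (le_ciSup (hbdd t) i) with hlt | heq
      · -- non-maximizer: x z i stays below M t
        have hc : ContinuousAt (fun s => x s i) t := (hode t ht0 i).continuousAt
        have hev : ∀ᶠ z in 𝓝 t, x z i < M t := hc.eventually_lt continuousAt_const hlt
        filter_upwards [nhdsWithin_le_nhds hev, self_mem_nhdsWithin] with z hz hz'
        have : z - t > 0 := sub_pos.mpr hz'
        exact lt_of_lt_of_le (div_neg_of_neg_of_pos (sub_neg.mpr hz) this) hr.le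
      · -- maximizer: derivative ≤ 0
        have hd := hode t ht0 i
        have hderiv_nonpos : f (∑ j, A i j * (x t j - x t i)) ≤ 0 := by
          apply f_nonpos_of_nonpos hf0 hsgn
          apply Finset.sum_nonpos
          intro j _
          have hj : x t j ≤ x t i := heq ▸ le_ciSup (hbdd t) j
          exact mul_nonpos_of_nonneg_of_nonpos (hpos i j) (by linarith)
        have hslope : Tendsto (slope (fun s => x s i) t) (𝓝[>] t) (𝓝 (f (∑ j, A i j * (x t j - x t i)))) := by
          exact (hasDerivAt_iff_tendsto_slope.mp hd).mono_left
            (nhdsWithin_mono t fun z hz => ne_of_gt hz)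
        have hev : ∀ᶠ z in 𝓝[>] t, slope (fun s => x s i) t z < r :=
          hslope.eventually_lt_const (lt_of_le_of_lt hderiv_nonpos hr)
        filter_upwards [hev] with z hz
        rwa [slope_def_field, heq] at hz
        -- slope (x · i) t z = (x z i - x t i)/(z - t)
    have hall : ∀ᶠ z in 𝓝[>] t, ∀ i, (x z i - M t) / (z - t) < r :=
      eventually_all.mpr key
    apply Eventually.frequently
    filter_upwards [hall, self_mem_nhdsWithin] with z hz hz'
    have hzt : (0:ℝ) < z - t := sub_pos.mpr hz'
    obtain ⟨i₀, hi₀⟩ := exists_eq_ciSup_of_finite (f := x z)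
    rw [slope_def_field]
    calc (M z - M t) / (z - t) = (x z i₀ - M t) / (z - t) := by
            rw [show M z = x z i₀ from hi₀.symm]
      _ < r := hz i₀
  -- apply the fencing theorem with constant barrier
  have := image_le_of_liminf_slope_right_le_deriv_boundary (B := fun _ => M a)
    (B' := fun _ => 0) hMcont le_rfl continuousOn_const
    (fun t _ => hasDerivWithinAt_const t _ _) bound (Set.right_mem_Icc.mpr hab)
  exact this

private lemma inf_eq_neg_sup_neg (n : ℕ) [NeZero n] (g : Fin n → ℝ) :
    (⨅ i, g i) = -⨆ i, -g i := by
  have hbdd : BddAbove (Set.range (fun i => -g i)) := Set.Finite.bddAbove (Set.finite_range _)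
  have hbddb : BddBelow (Set.range g) := Set.Finite.bddBelow (Set.finite_range _)
  apply le_antisymm
  · obtain ⟨i, hi⟩ := exists_eq_ciSup_of_finite (f := fun i => -g i)
    rw [← hi, neg_neg]
    exact ciInf_le hbddb i
  · exact le_ciInf fun i => neg_le.mpr (le_ciSup hbdd i)

theorem consensus_max_nonincreasing_min_nondecreasing (n : ℕ) [NeZero n]
    (A : Matrix (Fin n) (Fin n) ℝ) (hsym : A.IsSymm) (hpos : ∀ i j, 0 ≤ A i j)
    (f : ℝ → ℝ) (hf : Continuous f) (hf0 : f 0 = 0) (hsgn : ∀ y : ℝ, y ≠ 0 → 0 < y * f y)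
    (x : ℝ → Fin n → ℝ)
    (hode : ∀ t, 0 ≤ t → ∀ i,
      HasDerivAt (fun s => x s i) (f (∑ j, A i j * (x t j - x t i))) t) :
    AntitoneOn (fun t => ⨆ i, x t i) (Set.Ici 0) ∧
    MonotoneOn (fun t => ⨅ i, x t i) (Set.Ici 0) ∧
    AntitoneOn (fun t => (⨆ i, x t i) - ⨅ i, x t i) (Set.Ici 0) := by
  have hmax := sup_antitone n A hpos f hf0 hsgn x hode
  -- apply to -x with g u = -f(-u)
  set g : ℝ → ℝ := fun u => -f (-u) with hg
  have hg0 : g 0 = 0 := by simp [hg, hf0]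
  have hgsgn : ∀ y : ℝ, y ≠ 0 → 0 < y * g y := by
    intro y hy
    have := hsgn (-y) (neg_ne_zero.mpr hy)
    simp only [hg]
    nlinarith
  have hode' : ∀ t, 0 ≤ t → ∀ i,
      HasDerivAt (fun s => -x s i) (g (∑ j, A i j * (-x t j - -x t i))) t := by
    intro t ht i
    have : HasDerivAt (fun s => -x s i) _ t := (hode t ht i).neg
    convert this using 1
    simp only [hg, neg_inj]
    congr 1
    rw [← Finset.sum_neg_distrib]
    congr 1; funext j; ring
  have hmin' := sup_antitone n A hpos g hg0 hgsgn (fun t i => -x t i) hode'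
  have hmineq : ∀ t, (⨅ i, x t i) = -⨆ i, -x t i := fun t => inf_eq_neg_sup_neg n (x t)
  have hmin : MonotoneOn (fun t => ⨅ i, x t i) (Set.Ici 0) := by
    intro a ha b hb hab
    simp only [hmineq]
    exact neg_le_neg (hmin' ha hb hab)
  refine ⟨hmax, hmin, ?_⟩
  intro a ha b hb hab
  exact sub_le_sub (hmax ha hb hab) (hmin ha hb hab)
end
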